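/- Let L be the Laplace matrix of a connected network with complex conductances of positive real part, with b ≥ 2 boundary nodes and n ≥ 1 interior nodes, and let R = A - B C⁻¹ B^T be the response matrix, S = Re R. If x ∈ ℝ^b satisfies S·x = 0, then x is a constant vector. -/

import Mathlib

/-!
Extend a real boundary vector `x` to `v = (x, -C⁻¹ Bᵀ x)`; then `L v = (R x, 0)`, so
`Re (v* L v) = xᵀ S x`, which vanishes when `S x = 0`. The energy identity
`2 Re (v* L v) = ∑ Re c_uw |v_u - v_w|²` forces `v` to be constant along every edge, hence
constant on the connected network. The same argument for `v = (0, y)` with `C y = 0` shows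
that `C` is invertible.
-/

open Matrix

theorem SimpleGraph.Preconnected.apply_eq_of_forall_adj {V α : Type*} {G : SimpleGraph V}
    (hG : G.Preconnected) {f : V → α} (hf : ∀ u w, G.Adj u w → f u = f w) (u w : V) :
    f u = f w := by
  obtain ⟨p⟩ := hG u w
  induction p with
  | nil => rfl
  | cons hadj _ ih => exact (hf _ _ hadj).trans ih

theorem Matrix.IsSymm.exists_mulVec_sumElim_eq_schur {β ι α : Type*} [Fintype β] [Fintype ι]
    [DecidableEq ι] [CommRing α] {M : Matrix (β ⊕ ι) (β ⊕ ι) α} (hM : M.IsSymm)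
    (hD : IsUnit M.toBlocks₂₂.det) (x : β → α) :
    ∃ y, M *ᵥ Sum.elim x y =
      Sum.elim ((M.toBlocks₁₁ - M.toBlocks₁₂ * M.toBlocks₂₂⁻¹ * M.toBlocks₁₂ᵀ) *ᵥ x) 0 := by
  refine ⟨-(M.toBlocks₂₂⁻¹ *ᵥ M.toBlocks₁₂ᵀ *ᵥ x), ?_⟩
  have hBC : M.toBlocks₁₂ᵀ = M.toBlocks₂₁ := by
    rw [← fromBlocks_toBlocks M] at hM
    exact (isSymm_fromBlocks_iff.mp hM).2.1
  rw [hBC]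
  conv_lhs => rw [← fromBlocks_toBlocks M]
  ext (i | i)
  · simp [fromBlocks_mulVec, mulVec_neg, mulVec_mulVec, Matrix.mul_assoc, sub_eq_add_neg,
      add_mulVec, neg_mulVec]
  · simp [fromBlocks_mulVec, mulVec_neg, mulVec_mulVec, ← Matrix.mul_assoc, mul_nonsing_inv _ hD]

theorem re_star_dotProduct_mulVec_ofReal {β : Type*} [Fintype β] (R : Matrix β β ℂ)
    (x : β → ℝ) :
    (star (Complex.ofReal ∘ x) ⬝ᵥ R *ᵥ (Complex.ofReal ∘ x)).re =
      x ⬝ᵥ R.map Complex.re *ᵥ x := by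
  simp [dotProduct, mulVec, Complex.re_sum, Complex.mul_re, Finset.mul_sum]

section Laplacian

variable {V : Type*} [Fintype V] [DecidableEq V] {c : V → V → ℂ}

def conductanceLaplacian (c : V → V → ℂ) : Matrix V V ℂ :=
  of fun u v => if u = v then ∑ w, c u w else -c u v

theorem conductanceLaplacian_isSymm (hsymm : ∀ u v, c u v = c v u) :
    (conductanceLaplacian c).IsSymm := by
  ext u v
  by_cases h : u = v
  · subst h; rfl
  · simp [conductanceLaplacian, h, Ne.symm h, hsymm]

theorem conductanceLaplacian_mulVec_apply (hloop : ∀ u, c u u = 0) (v : V → ℂ) (u : V) :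
    (conductanceLaplacian c *ᵥ v) u = ∑ w, c u w * (v u - v w) := by
  have hrow : ∀ w, conductanceLaplacian c u w * v w =
      (if u = w then (∑ w', c u w') * v u else 0) - c u w * v w := by
    intro w
    by_cases h : u = w
    · subst h; simp [conductanceLaplacian, hloop]
    · simp [conductanceLaplacian, h]
  simp only [mulVec, dotProduct, hrow, Finset.sum_sub_distrib, Finset.sum_ite_eq,
    Finset.mem_univ, if_true, Finset.sum_mul, mul_sub]

theorem two_mul_star_dotProduct_conductanceLaplacian_mulVec (hsymm : ∀ u v, c u v = c v u)
    (hloop : ∀ u, c u u = 0) (v : V → ℂ) :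
    2 * (star v ⬝ᵥ conductanceLaplacian c *ᵥ v) =
      ∑ u, ∑ w, c u w * (Complex.normSq (v u - v w) : ℂ) := by
  have hq : star v ⬝ᵥ conductanceLaplacian c *ᵥ v =
      ∑ u, ∑ w, c u w * (starRingEnd ℂ (v u) * (v u - v w)) := by
    simp only [dotProduct, conductanceLaplacian_mulVec_apply hloop, Pi.star_apply,
      Complex.star_def, Finset.mul_sum]
    exact Finset.sum_congr rfl fun u _ => Finset.sum_congr rfl fun w _ => by ring
  have hswap : star v ⬝ᵥ conductanceLaplacian c *ᵥ v =
      ∑ u, ∑ w, c u w * (starRingEnd ℂ (v w) * (v w - v u)) := by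
    rw [hq, Finset.sum_comm]
    simp only [hsymm _ _]
  rw [two_mul]
  nth_rewrite 1 [hq]
  rw [hswap, ← Finset.sum_add_distrib]
  refine Finset.sum_congr rfl fun u _ => ?_
  rw [← Finset.sum_add_distrib]
  refine Finset.sum_congr rfl fun w _ => ?_
  rw [Complex.normSq_eq_conj_mul_self, map_sub]
  ring

theorem eq_of_re_star_dotProduct_conductanceLaplacian_mulVec_eq_zero
    (hsymm : ∀ u v, c u v = c v u) (hloop : ∀ u, c u u = 0)
    (hpos : ∀ u v, c u v ≠ 0 → 0 < (c u v).re) {v : V → ℂ}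
    (h0 : (star v ⬝ᵥ conductanceLaplacian c *ᵥ v).re = 0) {u w : V} (huw : c u w ≠ 0) :
    v u = v w := by
  have henergy : ∑ u, ∑ w, (c u w).re * Complex.normSq (v u - v w) = 0 := by
    have h := congrArg Complex.re
      (two_mul_star_dotProduct_conductanceLaplacian_mulVec hsymm hloop v)
    simpa [Complex.re_sum, h0] using h.symm
  have hnonneg : ∀ u w, 0 ≤ (c u w).re * Complex.normSq (v u - v w) := fun u w => by
    by_cases h : c u w = 0
    · simp [h]
    · exact mul_nonneg (hpos u w h).le (Complex.normSq_nonneg _)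
  have hterm := (Finset.sum_eq_zero_iff_of_nonneg fun w _ => hnonneg u w).mp
    ((Finset.sum_eq_zero_iff_of_nonneg fun u _ => Finset.sum_nonneg fun w _ => hnonneg u w).mp
      henergy u (Finset.mem_univ u)) w (Finset.mem_univ w)
  rw [mul_eq_zero, or_iff_right (hpos u w huw).ne', Complex.normSq_eq_zero, sub_eq_zero] at hterm
  exact hterm

theorem eq_of_re_star_dotProduct_conductanceLaplacian_mulVec_eq_zero_of_connected
    (hsymm : ∀ u v, c u v = c v u) (hloop : ∀ u, c u u = 0)
    (hpos : ∀ u v, c u v ≠ 0 → 0 < (c u v).re)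
    (hconn : (SimpleGraph.fromRel fun u v => c u v ≠ 0).Connected) {v : V → ℂ}
    (h0 : (star v ⬝ᵥ conductanceLaplacian c *ᵥ v).re = 0) (u w : V) : v u = v w := by
  refine hconn.preconnected.apply_eq_of_forall_adj (fun u w hadj => ?_) u w
  have huw : c u w ≠ 0 := ((SimpleGraph.fromRel_adj _ u w).mp hadj).2.elim id (hsymm w u ▸ ·)
  exact eq_of_re_star_dotProduct_conductanceLaplacian_mulVec_eq_zero hsymm hloop hpos h0 huw

end Laplacian

theorem isUnit_det_toBlocks₂₂_conductanceLaplacian {β ι : Type*} [Fintype β] [Fintype ι]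
    [DecidableEq β] [DecidableEq ι] [Nonempty β] {c : β ⊕ ι → β ⊕ ι → ℂ}
    (hsymm : ∀ u v, c u v = c v u) (hloop : ∀ u, c u u = 0)
    (hpos : ∀ u v, c u v ≠ 0 → 0 < (c u v).re)
    (hconn : (SimpleGraph.fromRel fun u v => c u v ≠ 0).Connected) :
    IsUnit (conductanceLaplacian c).toBlocks₂₂.det := by
  rw [isUnit_iff_ne_zero]
  intro hdet
  obtain ⟨y, hy, hCy⟩ := exists_mulVec_eq_zero_iff.mpr hdet
  have hLv : conductanceLaplacian c *ᵥ Sum.elim 0 y =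
      Sum.elim ((conductanceLaplacian c).toBlocks₁₂ *ᵥ y) 0 := by
    conv_lhs => rw [← fromBlocks_toBlocks (conductanceLaplacian c)]
    simp [fromBlocks_mulVec, hCy]
  have h0 : (star (Sum.elim 0 y) ⬝ᵥ conductanceLaplacian c *ᵥ Sum.elim 0 y).re = 0 := by
    simp [hLv, Function.star_sumElim, sumElim_dotProduct_sumElim]
  obtain ⟨i⟩ := ‹Nonempty β›
  exact hy <| funext fun j =>
    eq_of_re_star_dotProduct_conductanceLaplacian_mulVec_eq_zero_of_connected hsymm hloop hpos
      hconn h0 (Sum.inr j) (Sum.inl i)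

theorem response_real_part_kernel_constant_general {b n : ℕ} (hb : 2 ≤ b)
    (c : (Fin b ⊕ Fin n) → (Fin b ⊕ Fin n) → ℂ)
    (hsymm : ∀ u v, c u v = c v u)
    (hloop : ∀ u, c u u = 0)
    (hpos : ∀ u v, c u v ≠ 0 → 0 < (c u v).re)
    (hconn : (SimpleGraph.fromRel fun u v => c u v ≠ 0).Connected)
    (L : Matrix (Fin b ⊕ Fin n) (Fin b ⊕ Fin n) ℂ)
    (hL : L = Matrix.of fun u v => if u = v then ∑ w, c u w else -c u v)
    (A : Matrix (Fin b) (Fin b) ℂ) (hA : A = Matrix.of fun i j => L (Sum.inl i) (Sum.inl j))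
    (B : Matrix (Fin b) (Fin n) ℂ) (hB : B = Matrix.of fun i j => L (Sum.inl i) (Sum.inr j))
    (C : Matrix (Fin n) (Fin n) ℂ) (hC : C = Matrix.of fun i j => L (Sum.inr i) (Sum.inr j))
    (S : Matrix (Fin b) (Fin b) ℝ)
    (hS : S = Matrix.of fun i j => ((A - B * C⁻¹ * Bᵀ) i j).re) :
    ∀ x : Fin b → ℝ, S.mulVec x = 0 → ∃ k : ℝ, x = fun _ => k := by
  intro x hx
  obtain rfl : S = (A - B * C⁻¹ * Bᵀ).map Complex.re := hS
  obtain rfl : A = L.toBlocks₁₁ := hA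
  obtain rfl : B = L.toBlocks₁₂ := hB
  obtain rfl : C = L.toBlocks₂₂ := hC
  obtain rfl : L = conductanceLaplacian c := hL
  have i₀ : Fin b := ⟨0, by omega⟩
  have : Nonempty (Fin b) := ⟨i₀⟩
  have hCunit := isUnit_det_toBlocks₂₂_conductanceLaplacian hsymm hloop hpos hconn
  obtain ⟨y, hLv⟩ := (conductanceLaplacian_isSymm hsymm).exists_mulVec_sumElim_eq_schur hCunit
    (Complex.ofReal ∘ x)
  have h0 : (star (Sum.elim (Complex.ofReal ∘ x) y) ⬝ᵥ
      conductanceLaplacian c *ᵥ Sum.elim (Complex.ofReal ∘ x) y).re = 0 := by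
    rw [hLv, Function.star_sumElim, sumElim_dotProduct_sumElim, dotProduct_zero, add_zero,
      re_star_dotProduct_mulVec_ofReal, hx, dotProduct_zero]
  refine ⟨x i₀, funext fun i => Complex.ofReal_injective ?_⟩
  exact eq_of_re_star_dotProduct_conductanceLaplacian_mulVec_eq_zero_of_connected hsymm hloop hpos
    hconn h0 (Sum.inl i) (Sum.inl i₀)

theorem response_real_part_kernel_constant {b n : ℕ} (hb : 2 ≤ b) (hn : 0 < n)
    (c : (Fin b ⊕ Fin n) → (Fin b ⊕ Fin n) → ℂ)
    (hsymm : ∀ u v, c u v = c v u)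
    (hloop : ∀ u, c u u = 0)
    (hpos : ∀ u v, c u v ≠ 0 → 0 < (c u v).re)
    (hconn : (SimpleGraph.fromRel fun u v => c u v ≠ 0).Connected)
    (L : Matrix (Fin b ⊕ Fin n) (Fin b ⊕ Fin n) ℂ)
    (hL : L = Matrix.of fun u v => if u = v then ∑ w, c u w else -c u v)
    (A : Matrix (Fin b) (Fin b) ℂ) (hA : A = Matrix.of fun i j => L (Sum.inl i) (Sum.inl j))
    (B : Matrix (Fin b) (Fin n) ℂ) (hB : B = Matrix.of fun i j => L (Sum.inl i) (Sum.inr j))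
    (C : Matrix (Fin n) (Fin n) ℂ) (hC : C = Matrix.of fun i j => L (Sum.inr i) (Sum.inr j))
    (S : Matrix (Fin b) (Fin b) ℝ)
    (hS : S = Matrix.of fun i j => ((A - B * C⁻¹ * Bᵀ) i j).re) :
    ∀ x : Fin b → ℝ, S.mulVec x = 0 → ∃ k : ℝ, x = fun _ => k :=
  response_real_part_kernel_constant_general hb c hsymm hloop hpos hconn L hL A hA B hB C hC S hS
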